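/- arXiv:1211.0386 — 2 statements merged into one kernel-verified Lean document; each statement's English description precedes it below -/
import Mathlib

section
/- Let {F_j}_{j=1}^{mn} be an orthonormal basis of M_{m,n}(ℂ) under the trace inner product, and let L(X) = ∑_{j=1}^{mn−1} γ_j F_j X F_j† − γ_{mn} F_{mn} X F_{mn}† with all γ_j ≥ 0. Fix 1 ≤ k ≤ min{m,n} and suppose ξ_k := 1 − max W_k(F_{mn}† F_{mn}) > 0. If γ_i < ξ_k^{-1} γ_{mn} max W_k(F_{mn}† F_{mn}) for all i = 1, …, mn−1, then L is not k-positive. -/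
open Matrix ComplexOrder

/-- The maximum of the `k`-numerical range of a matrix `A`. -/
noncomputable def maxWk {N : ℕ} (k : ℕ) (A : Matrix (Fin N) (Fin N) ℂ) : ℝ :=
  sSup {t : ℝ | ∃ f : Fin k → (Fin N → ℂ),
    (∀ i j, star (f i) ⬝ᵥ f j = if i = j then 1 else 0) ∧
    t = (∑ j, star (f j) ⬝ᵥ A.mulVec (f j)).re}

/-!
Take an orthonormal frame `f₁, …, f_k` with `t = ∑ᵤ ⟨f_u, F_e† F_e f_u⟩`, and write
`L = ∑ⱼ σⱼ F_j (·) F_j†` with `σ_e = -γ_e`. Testing `(I_k ⊗ L)(ψψ†)`, where `ψ = ∑ᵤ e_u ⊗ f_u`,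
against `w = (I_k ⊗ F_e) ψ` gives `∑ⱼ σⱼ |cⱼ|²` with `cⱼ = tr (F_e P F_j†)` and `P` the projection
onto the span of the frame. Bessel's inequality for the orthonormal family `F_j` bounds
`∑ⱼ |cⱼ|²` by `tr (F_e P F_e†) = c_e = t`, so k-positivity forces `t (γ_max + γ_e) ≤ γ_max`.
Taking the supremum over frames gives `γ_e μ ≤ γ_max (1 - μ)` for `μ = max W_k(F_e† F_e)`,
which the hypothesis on the largest `γ_i` forbids.
-/

section Frame

variable {R κ ι : Type*} [CommSemiring R] [StarRing R] [Fintype ι]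

theorem conjTranspose_mul_self_of_orthonormal [DecidableEq κ] {f : κ → ι → R}
    (hf : ∀ i j, star (f i) ⬝ᵥ f j = if i = j then 1 else 0) :
    (of f)ᵀᴴ * (of f)ᵀ = 1 := by
  ext u w
  simpa [mul_apply, one_apply, dotProduct] using hf u w

theorem sum_star_dotProduct_mulVec_eq_trace [Fintype κ] (f : κ → ι → R) (A : Matrix ι ι R) :
    ∑ u, star (f u) ⬝ᵥ A *ᵥ f u = trace (A * ((of f)ᵀ * (of f)ᵀᴴ)) := by
  rw [← Matrix.mul_assoc, trace_mul_comm]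
  simp [trace, mul_apply, dotProduct, mulVec, Finset.mul_sum]

theorem star_mulVec_dotProduct_mulVec {ι' : Type*} [Fintype ι'] (K K' : Matrix ι' ι R)
    (x y : ι → R) : star (K *ᵥ x) ⬝ᵥ K' *ᵥ y = star x ⬝ᵥ (Kᴴ * K') *ᵥ y := by
  rw [star_mulVec, ← dotProduct_mulVec, mulVec_mulVec]

theorem star_uncurry_dotProduct_uncurry [Fintype κ] (f g : κ → ι → R) :
    star (Function.uncurry f) ⬝ᵥ Function.uncurry g = ∑ u, star (f u) ⬝ᵥ g u := by
  simp [dotProduct, Fintype.sum_prod_type]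

theorem mul_vecMulVec_star_mul_conjTranspose {ι' : Type*} (K : Matrix ι' ι R) (x y : ι → R) :
    K * vecMulVec x (star y) * Kᴴ = vecMulVec (K *ᵥ x) (star (K *ᵥ y)) := by
  rw [mul_vecMulVec, vecMulVec_mul, star_mulVec]

end Frame

theorem maxWk_set_nonempty {N k : ℕ} (hkn : k ≤ N) (A : Matrix (Fin N) (Fin N) ℂ) :
    {t : ℝ | ∃ f : Fin k → (Fin N → ℂ),
      (∀ i j, star (f i) ⬝ᵥ f j = if i = j then 1 else 0) ∧
      t = (∑ j, star (f j) ⬝ᵥ A.mulVec (f j)).re}.Nonempty := by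
  refine ⟨_, fun j => Pi.single (Fin.castLE hkn j) 1, fun i j => ?_, rfl⟩
  simp [dotProduct, Pi.single_apply, Fin.castLE_inj, eq_comm]

theorem maxWk_self {N : ℕ} (A : Matrix (Fin N) (Fin N) ℂ) : maxWk N A = A.trace.re := by
  rw [maxWk, ((maxWk_set_nonempty le_rfl A).subset_singleton_iff.1 ?_), csSup_singleton]
  rintro t ⟨f, hf, rfl⟩
  rw [Set.mem_singleton_iff, sum_star_dotProduct_mulVec_eq_trace,
    mul_eq_one_comm.1 (conjTranspose_mul_self_of_orthonormal hf), Matrix.mul_one]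

theorem maxWk_mul_le {N k : ℕ} {A : Matrix (Fin N) (Fin N) ℂ} {c b : ℝ} (hc : 0 ≤ c) (hb : 0 ≤ b)
    (h : ∀ f : Fin k → Fin N → ℂ, (∀ i j, star (f i) ⬝ᵥ f j = if i = j then 1 else 0) →
      (∑ j, star (f j) ⬝ᵥ A *ᵥ f j).re * c ≤ b) :
    maxWk k A * c ≤ b := by
  rw [maxWk, mul_comm, ← smul_eq_mul, ← Real.sSup_smul_of_nonneg hc]
  refine Real.sSup_le ?_ hb
  rintro _ ⟨_, ⟨f, hf, rfl⟩, rfl⟩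
  simpa only [smul_eq_mul, mul_comm] using h f hf

theorem sum_normSq_trace_mul_conjTranspose_le {J m n : Type*} [Fintype J] [DecidableEq J]
    [Fintype m] [Fintype n] {F : J → Matrix m n ℂ}
    (hF : ∀ r s, (F r * (F s)ᴴ).trace = if r = s then 1 else 0) (X : Matrix m n ℂ) :
    ∑ j, Complex.normSq (X * (F j)ᴴ).trace ≤ (X * Xᴴ).trace.re := by
  let v : Matrix m n ℂ → EuclideanSpace ℂ (m × n) := fun Y => WithLp.toLp 2 fun p => Y p.1 p.2
  have hinner : ∀ Y Z, inner ℂ (v Y) (v Z) = (Z * Yᴴ).trace := by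
    intro Y Z
    simp [v, PiLp.inner_apply, trace, mul_apply, Fintype.sum_prod_type]
  have hv : Orthonormal ℂ (v ∘ F) := by
    rw [orthonormal_iff_ite]
    intro i j
    simp [hinner, hF, eq_comm]
  have := hv.sum_inner_products_le (v X) (s := Finset.univ)
  simp only [Function.comp, hinner, Complex.sq_norm] at this
  rwa [@norm_sq_eq_re_inner ℂ, hinner] at this

theorem star_dotProduct_vecMulVec_mulVec {ι : Type*} [Fintype ι] (x w : ι → ℂ) :
    star w ⬝ᵥ vecMulVec x (star x) *ᵥ w = Complex.normSq (star x ⬝ᵥ w) := by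
  rw [vecMulVec_mulVec, op_smul_eq_smul, dotProduct_smul, smul_eq_mul, star_dotProduct w x,
    Complex.star_def, Complex.mul_conj]

section Ampliation

variable {κ ι ι' J : Type*} [Fintype ι] [Fintype J]

/-- `ampliation L A` is `(id ⊗ L) A`, with `A` read as a block matrix indexed by `κ`. -/
def ampliation (L : Matrix ι ι ℂ → Matrix ι' ι' ℂ) (A : Matrix (κ × ι) (κ × ι) ℂ) :
    Matrix (κ × ι') (κ × ι') ℂ :=
  of fun u v => L (of fun a b => A (u.1, a) (v.1, b)) u.2 v.2

theorem ampliation_vecMulVec_uncurry {σ : J → ℝ} {K : J → Matrix ι' ι ℂ}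
    {L : Matrix ι ι ℂ → Matrix ι' ι' ℂ} (hL : ∀ X, L X = ∑ j, (σ j : ℂ) • (K j * X * (K j)ᴴ))
    (f : κ → ι → ℂ) :
    ampliation L (vecMulVec (Function.uncurry f) (star (Function.uncurry f))) =
      ∑ j, (σ j : ℂ) • vecMulVec (Function.uncurry fun u => K j *ᵥ f u)
        (star (Function.uncurry fun u => K j *ᵥ f u)) := by
  ext p q
  have hblock : ∀ u v, (of fun a b => vecMulVec (Function.uncurry f) (star (Function.uncurry f))
      (u, a) (v, b)) = vecMulVec (f u) (star (f v)) := fun _ _ => rfl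
  rw [ampliation, of_apply, hblock, hL, Matrix.sum_apply, Matrix.sum_apply]
  simp only [mul_vecMulVec_star_mul_conjTranspose, Matrix.smul_apply, vecMulVec_apply]
  rfl

theorem re_star_dotProduct_ampliation_mulVec [Fintype κ] [Fintype ι'] {σ : J → ℝ}
    {K : J → Matrix ι' ι ℂ} {L : Matrix ι ι ℂ → Matrix ι' ι' ℂ}
    (hL : ∀ X, L X = ∑ j, (σ j : ℂ) • (K j * X * (K j)ᴴ)) (f : κ → ι → ℂ) (w : κ × ι' → ℂ) :
    (star w ⬝ᵥ ampliation L (vecMulVec (Function.uncurry f) (star (Function.uncurry f))) *ᵥ w).re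
      = ∑ j, σ j * Complex.normSq (star (Function.uncurry fun u => K j *ᵥ f u) ⬝ᵥ w) := by
  simp [ampliation_vecMulVec_uncurry hL, sum_mulVec, dotProduct_sum, smul_mulVec,
    star_dotProduct_vecMulVec_mulVec]

end Ampliation

theorem re_sum_star_dotProduct_mulVec_mul_le {J κ m n : Type*} [Fintype J] [DecidableEq J]
    [Fintype κ] [DecidableEq κ] [Fintype m] [Fintype n] {F : J → Matrix m n ℂ}
    (hF : ∀ r s, (F r * (F s)ᴴ).trace = if r = s then 1 else 0) {σ : J → ℝ} {e : J} {G : ℝ}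
    (hG : 0 ≤ G) (hσ : ∀ j ≠ e, σ j ≤ G) (hσe : σ e ≤ 0) {L : Matrix n n ℂ → Matrix m m ℂ}
    (hL : ∀ X, L X = ∑ j, (σ j : ℂ) • (F j * X * (F j)ᴴ)) {f : κ → n → ℂ}
    (hf : ∀ i j, star (f i) ⬝ᵥ f j = if i = j then 1 else 0)
    (hpos : (ampliation L (vecMulVec (Function.uncurry f) (star (Function.uncurry f)))).PosSemidef) :
    (∑ u, star (f u) ⬝ᵥ ((F e)ᴴ * F e) *ᵥ f u).re * (G - σ e) ≤ G := by
  set P := (of f)ᵀ * (of f)ᵀᴴ with hP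
  set c : J → ℂ := fun j => (F e * P * (F j)ᴴ).trace
  have hc : ∀ j, star (Function.uncurry fun u => F j *ᵥ f u) ⬝ᵥ
      (Function.uncurry fun u => F e *ᵥ f u) = c j := by
    intro j
    simp only [star_uncurry_dotProduct_uncurry, star_mulVec_dotProduct_mulVec,
      sum_star_dotProduct_mulVec_eq_trace]
    exact (trace_mul_cycle _ _ _).symm
  have hce : ∑ u, star (f u) ⬝ᵥ ((F e)ᴴ * F e) *ᵥ f u = c e := by
    rw [← hc, star_uncurry_dotProduct_uncurry]
    simp only [star_mulVec_dotProduct_mulVec]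
  have hP_idem : P * Pᴴ = P := by
    rw [hP, conjTranspose_mul, conjTranspose_conjTranspose, Matrix.mul_assoc,
      ← Matrix.mul_assoc _ (of f)ᵀ, conjTranspose_mul_self_of_orthonormal hf, Matrix.one_mul]
  have hquad : 0 ≤ ∑ j, σ j * Complex.normSq (c j) := by
    have := (Complex.nonneg_iff.1
      (hpos.dotProduct_mulVec_nonneg (Function.uncurry fun u => F e *ᵥ f u))).1
    simpa only [re_star_dotProduct_ampliation_mulVec hL, hc] using this
  have hbessel : ∑ j, Complex.normSq (c j) ≤ (c e).re := by
    have hGG : F e * P * (F e * P)ᴴ = F e * P * (F e)ᴴ := by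
      rw [conjTranspose_mul, ← Matrix.mul_assoc, Matrix.mul_assoc (F e) P, hP_idem]
    simpa only [hGG] using sum_normSq_trace_mul_conjTranspose_le hF (F e * P)
  have hsplit : ∑ j, σ j * Complex.normSq (c j) ≤
      G * (∑ j, Complex.normSq (c j) - Complex.normSq (c e)) + σ e * Complex.normSq (c e) := by
    rw [← Finset.add_sum_erase _ _ (Finset.mem_univ e),
      ← Finset.add_sum_erase _ (fun j => Complex.normSq (c j)) (Finset.mem_univ e),
      add_sub_cancel_left, Finset.mul_sum, add_comm]
    gcongr with j hj
    exacts [Complex.normSq_nonneg _, hσ j (Finset.ne_of_mem_erase hj)]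
  have hre := Complex.re_sq_le_normSq (c e)
  rw [hce]
  rcases le_or_gt (c e).re 0 with ht | ht <;> nlinarith

theorem stmt_10_general {m n k : ℕ} (hk1 : 1 ≤ k) (hkn : k ≤ n)
    (F : Fin (m * n) → Matrix (Fin m) (Fin n) ℂ)
    (hF : ∀ r s, (F r * (F s)ᴴ).trace = if r = s then 1 else 0)
    (γ : Fin (m * n) → ℝ) (hγ : ∀ j, 0 ≤ γ j)
    (e : Fin (m * n))
    (L : Matrix (Fin n) (Fin n) ℂ → Matrix (Fin m) (Fin m) ℂ)
    (hL : ∀ X, L X =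
      (∑ j ∈ Finset.univ.filter (fun j : Fin (m * n) => j ≠ e),
        (γ j : ℂ) • (F j * X * (F j)ᴴ)) - (γ e : ℂ) • (F e * X * (F e)ᴴ))
    (hξ : 0 < 1 - maxWk k ((F e)ᴴ * F e))
    (hγsmall : ∀ i, i ≠ e →
      γ i < (1 - maxWk k ((F e)ᴴ * F e))⁻¹ * (γ e * maxWk k ((F e)ᴴ * F e))) :
    ¬ (∀ A : Matrix (Fin k × Fin n) (Fin k × Fin n) ℂ, A.PosSemidef →
      (Matrix.of fun u v : Fin k × Fin m =>
        L (Matrix.of fun a b => A (u.1, a) (v.1, b)) u.2 v.2).PosSemidef) := by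
  intro hpos
  obtain hmn | hmn : m * n = 1 ∨ 2 ≤ m * n := by have := e.pos; omega
  · obtain ⟨rfl, rfl⟩ := mul_eq_one.1 hmn
    obtain rfl : k = 1 := le_antisymm hkn hk1
    rw [maxWk_self, trace_mul_comm, hF, if_pos rfl] at hξ
    simp at hξ
  have : Nontrivial (Fin (m * n)) := Fin.nontrivial_iff_two_le.2 hmn
  obtain ⟨i, hi⟩ := exists_ne e
  obtain ⟨i₀, hi₀, hmax⟩ :=
    Finset.exists_max_image (Finset.univ.erase e) γ ⟨i, Finset.mem_erase.2 ⟨hi, Finset.mem_univ i⟩⟩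
  set σ : Fin (m * n) → ℝ := fun j => if j = e then -γ e else γ j
  have hσL : ∀ X, L X = ∑ j, (σ j : ℂ) • (F j * X * (F j)ᴴ) := by
    intro X
    rw [hL, ← Finset.add_sum_erase _ _ (Finset.mem_univ e), Finset.filter_ne', add_comm,
      sub_eq_add_neg]
    congr 1
    · exact Finset.sum_congr rfl fun j hj => by simp [σ, Finset.ne_of_mem_erase hj]
    · simp [σ]
  have hμ : maxWk k ((F e)ᴴ * F e) * (γ i₀ + γ e) ≤ γ i₀ := by
    refine maxWk_mul_le (by linarith [hγ i₀, hγ e]) (hγ i₀) fun f hf => ?_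
    have := re_sum_star_dotProduct_mulVec_mul_le hF (hγ i₀)
      (fun j hj => (if_neg hj).trans_le (hmax j (Finset.mem_erase.2 ⟨hj, Finset.mem_univ j⟩)))
      (by simpa [σ] using hγ e) hσL hf (hpos _ (posSemidef_vecMulVec_self_star _))
    simpa [σ] using this
  have := (lt_inv_mul_iff₀ hξ).1 (hγsmall i₀ (Finset.ne_of_mem_erase hi₀))
  nlinarith

/-- with a single negative term (`p = mn − 1`), if
`γ_i < ξ_k⁻¹ γ_{mn} max W_k(F_{mn}† F_{mn})` for all `i ≠ e`, then `L` is not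
`k`-positive. -/
theorem stmt_10 {m n k : ℕ} (hk1 : 1 ≤ k) (hkm : k ≤ m) (hkn : k ≤ n)
    (F : Fin (m * n) → Matrix (Fin m) (Fin n) ℂ)
    (hF : ∀ r s, (F r * (F s)ᴴ).trace = if r = s then 1 else 0)
    (γ : Fin (m * n) → ℝ) (hγ : ∀ j, 0 ≤ γ j)
    (e : Fin (m * n)) (he : (e : ℕ) = m * n - 1)
    (L : Matrix (Fin n) (Fin n) ℂ → Matrix (Fin m) (Fin m) ℂ)
    (hL : ∀ X, L X =
      (∑ j ∈ Finset.univ.filter (fun j : Fin (m * n) => j ≠ e),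
        (γ j : ℂ) • (F j * X * (F j)ᴴ)) - (γ e : ℂ) • (F e * X * (F e)ᴴ))
    (hξ : 0 < 1 - maxWk k ((F e)ᴴ * F e))
    (hγsmall : ∀ i, i ≠ e →
      γ i < (1 - maxWk k ((F e)ᴴ * F e))⁻¹ * (γ e * maxWk k ((F e)ᴴ * F e))) :
    ¬ (∀ A : Matrix (Fin k × Fin n) (Fin k × Fin n) ℂ, A.PosSemidef →
      (Matrix.of fun u v : Fin k × Fin m =>
        L (Matrix.of fun a b => A (u.1, a) (v.1, b)) u.2 v.2).PosSemidef) :=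
  stmt_10_general hk1 hkn F hF γ hγ e L hL hξ hγsmall
end

section
/- Let D = (d_{ij}) be an n×n nonnegative matrix (n ≥ 2) with all row sums and column sums equal to n, and let Λ_D be the D-type map Λ_D(A) = diag(∑_k a_{kk} d_{k1}, …, ∑_k a_{kk} d_{kn}) − A. Then the following are equivalent: (a) Λ_D is completely positive; (b) Λ_D is 2-positive; (c) D = n I_n. -/
/-!
For `D = nI`, `(I_k ⊗ Λ_D)(A)` is the Schur product of `A` with `J_k ⊗ (nI - J_n)`, and
`nI - J_n = (nI - J_n)² / n` is positive semidefinite, so the Schur product theorem gives complete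
positivity.

Conversely, for a 2-colouring `σ` of the indices test 2-positivity on `A = x x*` with
`x = ∑ᵢ e_{σ i} ⊗ eᵢ`: then `⟪x, (I₂ ⊗ Λ_D)(A) x⟫ = ∑_{σ i = σ j} d i j - n² = -∑_{σ i ≠ σ j} d i j`,
because the entries of `D` add up to `n²`. As `D ≥ 0`, every entry `d i j` with `σ i ≠ σ j`
vanishes, and colouring `j` apart from everything else shows that `D` is diagonal.
-/

open Matrix ComplexOrder

namespace Matrix

variable {m ι : Type*} [Fintype m] [DecidableEq m]

/-- `id ⊗ Φ` on `Matrix ι ι ℂ ⊗ Matrix m m ℂ`, with `ι × m` indexing the tensor product. -/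
def ampliation (Φ : Matrix m m ℂ → Matrix m m ℂ) (A : Matrix (ι × m) (ι × m) ℂ) :
    Matrix (ι × m) (ι × m) ℂ :=
  of fun u v => Φ (of fun a b => A (u.1, a) (v.1, b)) u.2 v.2

def dTypeMap (d : m → m → ℝ) (A : Matrix m m ℂ) : Matrix m m ℂ :=
  diagonal (fun j => ∑ i, (d i j : ℂ) * A i i) - A

theorem ampliation_dTypeMap_apply (d : m → m → ℝ) (A : Matrix (ι × m) (ι × m) ℂ) (u v : ι × m) :
    ampliation (dTypeMap d) A u v =
      (if u.2 = v.2 then ∑ i, (d i u.2 : ℂ) * A (u.1, i) (v.1, i) else 0) - A u v := by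
  simp [ampliation, dTypeMap, diagonal_apply]

theorem posSemidef_natCast_card_sub_allOnes :
    ((Fintype.card m : Matrix m m ℂ) - of fun _ _ => 1).PosSemidef := by
  set W : Matrix m m ℂ := (Fintype.card m : Matrix m m ℂ) - of fun _ _ => 1
  have hW : Wᴴ = W := by
    ext i j; by_cases h : i = j <;> simp [W, h, natCast_apply, Ne.symm]
  have hsq : W * W = (Fintype.card m : ℂ) • W := by
    ext i j; by_cases h : i = j <;> simp [W, h, sub_mul, mul_sub, mul_apply, natCast_apply]
  rcases isEmpty_or_nonempty m with hm | hm
  · simpa [Subsingleton.elim W 0] using PosSemidef.zero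
  have hn : (Fintype.card m : ℂ) ≠ 0 := by simp [Fintype.card_ne_zero]
  have hW_eq : W = (Fintype.card m : ℂ)⁻¹ • (Wᴴ * W) := by
    rw [hW, hsq, smul_smul, inv_mul_cancel₀ hn, one_smul]
  rw [hW_eq]
  exact (posSemidef_conjTranspose_mul_self W).smul (by positivity)

theorem ampliation_dTypeMap_card_eq_hadamard (A : Matrix (ι × m) (ι × m) ℂ) :
    ampliation (dTypeMap fun i j => if i = j then (Fintype.card m : ℝ) else 0) A =
      A ⊙ ((Fintype.card m : Matrix m m ℂ) - of fun _ _ => 1).submatrix Prod.snd Prod.snd := by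
  ext ⟨a, i⟩ ⟨b, j⟩
  by_cases h : i = j
  · subst h
    simp [ampliation_dTypeMap_apply, natCast_apply, sub_mul, mul_comm,
      apply_ite (fun r : ℝ => (r : ℂ)), ite_mul]
  · simp [ampliation_dTypeMap_apply, h, natCast_apply]

theorem PosSemidef.ampliation_dTypeMap_card {A : Matrix (ι × m) (ι × m) ℂ} (hA : A.PosSemidef) :
    (ampliation (dTypeMap fun i j => if i = j then (Fintype.card m : ℝ) else 0) A).PosSemidef := by
  rw [ampliation_dTypeMap_card_eq_hadamard]
  exact hA.hadamard (posSemidef_natCast_card_sub_allOnes.submatrix _)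

variable [Fintype ι] [DecidableEq ι]

omit [DecidableEq m] in
theorem sum_ite_fst_eq {M : Type*} [AddCommMonoid M] (σ : m → ι) (f : ι × m → M) :
    ∑ u, (if u.1 = σ u.2 then f u else 0) = ∑ i, f (σ i, i) := by
  rw [Fintype.sum_prod_type, Finset.sum_comm]
  simp

def graphIndicator (σ : m → ι) : ι × m → ℂ := fun u => if u.1 = σ u.2 then 1 else 0

theorem dotProduct_mulVec_ampliation_dTypeMap_graphIndicator (d : m → m → ℝ) (σ : m → ι) :
    star (graphIndicator σ) ⬝ᵥ
        ampliation (dTypeMap d) (vecMulVec (graphIndicator σ) (star (graphIndicator σ))) *ᵥ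
          graphIndicator σ =
      ((∑ i, ∑ j, if σ i = σ j then d i j else 0) - Fintype.card m ^ 2 : ℝ) := by
  simp only [graphIndicator, dotProduct, mulVec, Pi.star_apply, apply_ite (star : ℂ → ℂ),
    star_one, star_zero, ite_mul, one_mul, zero_mul, mul_ite, mul_one, mul_zero, sum_ite_fst_eq,
    ampliation_dTypeMap_apply, vecMulVec, of_apply]
  push_cast
  simp [Finset.sum_sub_distrib, sq]
  rw [Finset.sum_comm]
  refine Finset.sum_congr rfl fun i _ => Finset.sum_congr rfl fun j _ => ?_
  split_ifs <;> simp_all [eq_comm]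

theorem eq_zero_of_ampliation_posSemidef {d : m → m → ℝ} (hd : ∀ i j, 0 ≤ d i j)
    (hcol : ∀ j, ∑ i, d i j = Fintype.card m) (σ : m → ι)
    (hpos : ∀ A : Matrix (ι × m) (ι × m) ℂ, A.PosSemidef → (ampliation (dTypeMap d) A).PosSemidef)
    {i j : m} (hij : σ i ≠ σ j) : d i j = 0 := by
  have hQ := (hpos _ (posSemidef_vecMulVec_self_star (graphIndicator σ))).dotProduct_mulVec_nonneg
    (graphIndicator σ)
  rw [dotProduct_mulVec_ampliation_dTypeMap_graphIndicator, Complex.zero_le_real] at hQ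
  set cross : m → m → ℝ := fun k l => if σ k = σ l then 0 else d k l
  have hcross_nonneg : ∀ k l, 0 ≤ cross k l := fun k l => by
    by_cases h : σ k = σ l <;> simp [cross, h, hd]
  have hcross_sum : ∑ k, ∑ l, cross k l ≤ 0 := by
    have hsplit : ∀ k l, cross k l = d k l - if σ k = σ l then d k l else 0 := fun k l => by
      by_cases h : σ k = σ l <;> simp [cross, h]
    have htotal : ∑ k, ∑ l, d k l = Fintype.card m ^ 2 := by
      rw [Finset.sum_comm]; simp [hcol, sq]
    simp only [hsplit, Finset.sum_sub_distrib, htotal]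
    linarith
  have hle : d i j ≤ ∑ k, ∑ l, cross k l := calc
    d i j = cross i j := by simp [cross, hij]
    _ ≤ ∑ l, cross i l := Finset.single_le_sum (fun l _ => hcross_nonneg i l) (Finset.mem_univ j)
    _ ≤ ∑ k, ∑ l, cross k l :=
      Finset.single_le_sum (fun k _ => Finset.sum_nonneg fun l _ => hcross_nonneg k l)
        (Finset.mem_univ i)
  linarith [hd i j]

omit [Fintype ι] [DecidableEq ι] in
theorem eq_ite_card_of_twoPositive {d : m → m → ℝ} (hd : ∀ i j, 0 ≤ d i j)
    (hcol : ∀ j, ∑ i, d i j = Fintype.card m)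
    (hpos : ∀ A : Matrix (Fin 2 × m) (Fin 2 × m) ℂ, A.PosSemidef →
      (ampliation (dTypeMap d) A).PosSemidef) (i j : m) :
    d i j = if i = j then (Fintype.card m : ℝ) else 0 := by
  have hoff : ∀ k l, k ≠ l → d k l = 0 := fun k l hkl =>
    eq_zero_of_ampliation_posSemidef hd hcol (fun p => if p = l then 1 else 0) hpos
      (by simp [hkl])
  split_ifs with h
  · subst h
    rw [← hcol i, Finset.sum_eq_single i (fun k _ hk => hoff k i hk) (by simp)]
  · exact hoff i j h

end Matrix

theorem stmt_17_general {n : ℕ} (d : Fin n → Fin n → ℝ)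
    (hd : ∀ i j, 0 ≤ d i j)
    (hcol : ∀ j, ∑ i, d i j = n)
    (L : Matrix (Fin n) (Fin n) ℂ → Matrix (Fin n) (Fin n) ℂ)
    (hL : ∀ A, L A = Matrix.diagonal (fun j => ∑ i, (d i j : ℂ) * A i i) - A) :
    List.TFAE
      [ (∀ k : ℕ, ∀ A : Matrix (Fin k × Fin n) (Fin k × Fin n) ℂ,
          A.PosSemidef →
          (Matrix.of fun u v : Fin k × Fin n =>
            L (Matrix.of fun a b => A (u.1, a) (v.1, b)) u.2 v.2).PosSemidef),
        (∀ A : Matrix (Fin 2 × Fin n) (Fin 2 × Fin n) ℂ, A.PosSemidef →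
          (Matrix.of fun u v : Fin 2 × Fin n =>
            L (Matrix.of fun a b => A (u.1, a) (v.1, b)) u.2 v.2).PosSemidef),
        (∀ i j, d i j = if i = j then (n : ℝ) else 0) ] := by
  obtain rfl : L = dTypeMap d := funext hL
  have hcol' : ∀ j, ∑ i, d i j = Fintype.card (Fin n) := by simpa using hcol
  tfae_have 1 → 2 := fun h => h 2
  tfae_have 2 → 3 := fun h i j => by simpa using eq_ite_card_of_twoPositive hd hcol' h i j
  tfae_have 3 → 1 := fun h k A hA => by
    obtain rfl : d = fun i j => if i = j then (Fintype.card (Fin n) : ℝ) else 0 := by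
      simpa [funext_iff] using h
    exact hA.ampliation_dTypeMap_card
  tfae_finish

open Matrix ComplexOrder in
/-- for a nonnegative `D` with all row and column sums `n`
(`n ≥ 2`), the `D`-type map `Λ_D` is completely positive iff it is 2-positive
iff `D = nI`. -/
theorem stmt_17 {n : ℕ} (hn : 2 ≤ n) (d : Fin n → Fin n → ℝ)
    (hd : ∀ i j, 0 ≤ d i j)
    (hrow : ∀ i, ∑ j, d i j = n) (hcol : ∀ j, ∑ i, d i j = n)
    (L : Matrix (Fin n) (Fin n) ℂ → Matrix (Fin n) (Fin n) ℂ)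
    (hL : ∀ A, L A = Matrix.diagonal (fun j => ∑ i, (d i j : ℂ) * A i i) - A) :
    List.TFAE
      [ (∀ k : ℕ, ∀ A : Matrix (Fin k × Fin n) (Fin k × Fin n) ℂ,
          A.PosSemidef →
          (Matrix.of fun u v : Fin k × Fin n =>
            L (Matrix.of fun a b => A (u.1, a) (v.1, b)) u.2 v.2).PosSemidef),
        (∀ A : Matrix (Fin 2 × Fin n) (Fin 2 × Fin n) ℂ, A.PosSemidef →
          (Matrix.of fun u v : Fin 2 × Fin n =>
            L (Matrix.of fun a b => A (u.1, a) (v.1, b)) u.2 v.2).PosSemidef),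
        (∀ i j, d i j = if i = j then (n : ℝ) else 0) ] :=
  stmt_17_general d hd hcol L hL
end
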